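/- arXiv:math/0409534 — 4 statements merged into one kernel-verified Lean document; each statement's English description precedes it below -/
import Mathlib

section
/- Let P(z) = Σ_{i=1}^k h_{α_i}(z)^d with d ≥ 2 and all α_i ∈ ℂ^n isotropic (Σ_l (α_i)_l² = 0). Define the k×k matrix Ψ_P over ℂ[z] with (i,j) entry ⟨α_i, α_j⟩·h_{α_j}(z)^{d-2}. Then for every m ≥ 1, Tr(Hes(P)^m) = (d(d-1))^m · Tr(Ψ_P^m). -/
open MvPolynomial

/-- The linear polynomial `h_α(z) = ∑ α_l z_l`. -/
noncomputable def hlin {n : ℕ} (α : Fin n → ℂ) : MvPolynomial (Fin n) ℂ :=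
  ∑ l, C (α l) * X l

/-- The Hessian matrix of a polynomial. -/
noncomputable def hess {n : ℕ} (P : MvPolynomial (Fin n) ℂ) :
    Matrix (Fin n) (Fin n) (MvPolynomial (Fin n) ℂ) :=
  Matrix.of fun i j => pderiv i (pderiv j P)

/-!
With `B` the `k × n` matrix of the coefficients `α_i` and `D = diag(h_{α_j}^{d-2})`, the Hessian
of `P` is `d(d-1) • Bᵀ D B` while `Ψ_P = B Bᵀ D`; the traces of their powers agree because
`tr((XY)^m) = tr((YX)^m)` for `m ≥ 1`, applied to `X = Bᵀ D`, `Y = B`.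
-/

namespace Matrix

variable {R a b : Type*} [Fintype a] [Fintype b] [DecidableEq a] [DecidableEq b]

theorem mul_pow_succ_eq_mul_pow_mul [Semiring R] (A : Matrix a b R) (B : Matrix b a R) (p : ℕ) :
    (A * B) ^ (p + 1) = A * (B * A) ^ p * B := by
  induction p with
  | zero => simp
  | succ p ih => simp only [pow_succ _ (p + 1), ih, pow_succ, Matrix.mul_assoc]

theorem trace_mul_pow_comm [CommSemiring R] (A : Matrix a b R) (B : Matrix b a R) {m : ℕ}
    (hm : m ≠ 0) : trace ((A * B) ^ m) = trace ((B * A) ^ m) := by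
  obtain ⟨p, rfl⟩ := Nat.exists_eq_succ_of_ne_zero hm
  rw [mul_pow_succ_eq_mul_pow_mul, trace_mul_comm, ← Matrix.mul_assoc, ← pow_succ']

end Matrix

open Matrix

variable {n k : ℕ}

lemma pderiv_hlin (α : Fin n → ℂ) (j : Fin n) : pderiv j (hlin α) = C (α j) := by
  simp [hlin, pderiv_X, Pi.single_apply]

lemma pderiv_pderiv_hlin_pow (α : Fin n → ℂ) (d : ℕ) (i j : Fin n) :
    pderiv i (pderiv j (hlin α ^ d)) =
      ((d * (d - 1) : ℕ) : MvPolynomial (Fin n) ℂ) * (C (α i) * hlin α ^ (d - 2) * C (α j)) := by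
  have hd : pderiv i (d : MvPolynomial (Fin n) ℂ) = 0 := by
    rw [← map_natCast C]; exact pderiv_C
  simp only [pderiv_pow, pderiv_mul, pderiv_hlin, pderiv_C, hd, Nat.sub_sub]
  push_cast
  ring

noncomputable def coeffMatrix (α : Fin k → Fin n → ℂ) :
    Matrix (Fin k) (Fin n) (MvPolynomial (Fin n) ℂ) :=
  of fun i l => C (α i l)

lemma hess_sum_hlin_pow (α : Fin k → Fin n → ℂ) (d : ℕ) :
    hess (∑ i, hlin (α i) ^ d) = ((d * (d - 1) : ℕ) : MvPolynomial (Fin n) ℂ) •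
      ((coeffMatrix α)ᵀ * diagonal (fun j => hlin (α j) ^ (d - 2)) * coeffMatrix α) := by
  ext i l : 1
  simp only [hess, of_apply, map_sum, pderiv_pderiv_hlin_pow]
  rw [Matrix.smul_apply, mul_apply]
  simp [coeffMatrix, mul_diagonal, Finset.mul_sum, mul_assoc]

theorem trace_hessian_pow_eq_general {n k d : ℕ} (α : Fin k → (Fin n → ℂ))
    (m : ℕ) (hm : 1 ≤ m) :
    Matrix.trace ((hess (∑ i, (hlin (α i)) ^ d)) ^ m) =
      ((d * (d - 1) : ℕ) : MvPolynomial (Fin n) ℂ) ^ m *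
        Matrix.trace
          ((Matrix.of fun i j : Fin k =>
            C (∑ l, α i l * α j l) * (hlin (α j)) ^ (d - 2)) ^ m) := by
  set D := diagonal fun j => hlin (α j) ^ (d - 2)
  have hΨ : (of fun i j : Fin k => C (∑ l, α i l * α j l) * hlin (α j) ^ (d - 2)) =
      coeffMatrix α * ((coeffMatrix α)ᵀ * D) := by
    ext i j : 1
    rw [← Matrix.mul_assoc, mul_diagonal, mul_apply]
    simp [coeffMatrix, map_sum, Finset.sum_mul]
  rw [hess_sum_hlin_pow, smul_pow, trace_smul, hΨ,
    trace_mul_pow_comm _ _ (by omega), smul_eq_mul]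

theorem trace_hessian_pow_eq {n k d : ℕ} (hd : 2 ≤ d) (α : Fin k → (Fin n → ℂ))
    (hiso : ∀ i : Fin k, ∑ l, (α i l) ^ 2 = 0) (m : ℕ) (hm : 1 ≤ m) :
    Matrix.trace ((hess (∑ i, (hlin (α i)) ^ d)) ^ m) =
      ((d * (d - 1) : ℕ) : MvPolynomial (Fin n) ℂ) ^ m *
        Matrix.trace
          ((Matrix.of fun i j : Fin k =>
            C (∑ l, α i l * α j l) * (hlin (α j)) ^ (d - 2)) ^ m) :=
  trace_hessian_pow_eq_general α m hm
end

section
/- For any polynomials g, f ∈ ℂ[z_1,...,z_n] and any integer l ≥ 1, Δ^l(g·f) = Σ_{k_1+k_2+k_3 = l, k_i ≥ 0} 2^{k_2}·(l!/(k_1!k_2!k_3!))·Σ_{i_1,...,i_{k_2}=1}^n (∂^{k_2} Δ^{k_1} g / ∂z_{i_1}···∂z_{i_{k_2}})·(∂^{k_2} Δ^{k_3} f / ∂z_{i_1}···∂z_{i_{k_2}}). -/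
open MvPolynomial

/-- The Laplace operator on polynomials in `n` variables. -/
noncomputable def lap {n : ℕ} (P : MvPolynomial (Fin n) ℂ) : MvPolynomial (Fin n) ℂ :=
  ∑ i, pderiv i (pderiv i P)

/-- The iterated partial derivative `∂^k/∂z_{v 0} ⋯ ∂z_{v (k-1)}`. -/
noncomputable def pderivTuple {n k : ℕ} (v : Fin k → Fin n)
    (P : MvPolynomial (Fin n) ℂ) : MvPolynomial (Fin n) ℂ :=
  (List.ofFn v).foldr (fun i Q => pderiv i Q) P

/-!
Let `μ : P ⊗ P → P` be multiplication on `P = ℂ[z₁, …, zₙ]`. The product rule reads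
`Δ ∘ μ = μ ∘ (A + 2B + C)` with `A = Δ ⊗ 1`, `B = ∑ᵢ ∂ᵢ ⊗ ∂ᵢ`, `C = 1 ⊗ Δ`, and these operators
commute because partial derivatives do. Hence `Δ^l ∘ μ = μ ∘ (A + 2B + C)^l`, which the trinomial
theorem expands, and `Bᵏ (g ⊗ f) = ∑_v ∂_v g ⊗ ∂_v f`.
-/

open Finset TensorProduct

theorem Commute.add_add_pow {R : Type*} [Semiring R] {a b c : R} (hab : Commute a b)
    (hac : Commute a c) (hbc : Commute b c) (l : ℕ) :
    (a + b + c) ^ l = ∑ k₁ ∈ range (l + 1), ∑ k₂ ∈ range (l + 1 - k₁),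
      (l.choose k₁ * (l - k₁).choose k₂) • (a ^ k₁ * b ^ k₂ * c ^ (l - k₁ - k₂)) := by
  rw [add_assoc, (hab.add_right hac).add_pow]
  refine sum_congr rfl fun k₁ hk₁ => ?_
  rw [Nat.sub_add_comm (Nat.le_of_lt_succ (mem_range.mp hk₁)), hbc.add_pow, mul_sum, sum_mul]
  refine sum_congr rfl fun k₂ _ => ?_
  rw [nsmul_eq_mul', Nat.cast_mul, Nat.cast_comm (l.choose k₁)]
  simp only [mul_assoc]

open Nat in
theorem Nat.factorial_div_factorial_mul_factorial_mul_factorial {l a b : ℕ} (h : a + b ≤ l) :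
    l ! / (a ! * b ! * (l - a - b)!) = l.choose a * (l - a).choose b := by
  refine Nat.div_eq_of_eq_mul_left (by positivity) ?_
  rw [← Nat.choose_mul_factorial_mul_factorial (show a ≤ l by omega),
    ← Nat.choose_mul_factorial_mul_factorial (show b ≤ l - a by omega), Nat.sub_sub]
  ring

theorem TensorProduct.commute_map {R M N : Type*} [CommSemiring R] [AddCommMonoid M]
    [AddCommMonoid N] [Module R M] [Module R N] {f₁ f₂ : Module.End R M} {g₁ g₂ : Module.End R N}
    (hf : Commute f₁ f₂) (hg : Commute g₁ g₂) :
    Commute (TensorProduct.map f₁ g₁) (TensorProduct.map f₂ g₂) := by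
  rw [commute_iff_eq, ← TensorProduct.map_mul, ← TensorProduct.map_mul, hf.eq, hg.eq]

theorem MvPolynomial.pderiv_pderiv_comm {R σ : Type*} [CommSemiring R] (i j : σ)
    (p : MvPolynomial σ R) : pderiv i (pderiv j p) = pderiv j (pderiv i p) := by
  induction p using MvPolynomial.induction_on with
  | C a => simp
  | add p q hp hq => simp only [map_add, hp, hq]
  | mul_X p s hp =>
    have hX (i j : σ) : pderiv i (pderiv j (X s : MvPolynomial σ R)) = 0 := by
      classical
      rw [pderiv_X, Pi.single_apply]
      split_ifs <;> simp
    simp only [Derivation.leibniz, map_add, smul_eq_mul, hp, hX]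
    ring

section Laplacian

variable {n : ℕ}

theorem pderivTuple_cons {k : ℕ} (i : Fin n) (v : Fin k → Fin n) (p : MvPolynomial (Fin n) ℂ) :
    pderivTuple (Fin.cons i v) p = pderiv i (pderivTuple v p) := by
  simp [pderivTuple, List.ofFn_succ]

theorem lap_mul (p q : MvPolynomial (Fin n) ℂ) :
    lap (p * q) = lap p * q + 2 * ∑ i, pderiv i p * pderiv i q + p * lap q := by
  simp only [lap, pderiv_mul, map_add, sum_add_distrib, mul_sum, sum_mul, two_mul]
  ring

noncomputable def lapLin : Module.End ℂ (MvPolynomial (Fin n) ℂ) :=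
  ∑ i, (pderiv i).toLinearMap * (pderiv i).toLinearMap

theorem coe_lapLin : ⇑(lapLin : Module.End ℂ (MvPolynomial (Fin n) ℂ)) = lap := by
  ext p : 1
  simp [lapLin, lap]

theorem lapLin_pow_apply (k : ℕ) (p : MvPolynomial (Fin n) ℂ) : (lapLin ^ k) p = lap^[k] p := by
  rw [Module.End.pow_apply, coe_lapLin]

theorem commute_pderiv_lapLin (i : Fin n) : Commute (pderiv i).toLinearMap lapLin :=
  Commute.sum_right _ _ _ fun j _ =>
    have hij : Commute (pderiv i).toLinearMap (pderiv j).toLinearMap :=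
      LinearMap.ext (pderiv_pderiv_comm i j)
    hij.mul_right hij

noncomputable def gradPairing :
    Module.End ℂ (MvPolynomial (Fin n) ℂ ⊗[ℂ] MvPolynomial (Fin n) ℂ) :=
  ∑ i, TensorProduct.map (pderiv i).toLinearMap (pderiv i).toLinearMap

theorem gradPairing_pow_tmul (k : ℕ) (p q : MvPolynomial (Fin n) ℂ) :
    (gradPairing ^ k) (p ⊗ₜ q) = ∑ v : Fin k → Fin n, pderivTuple v p ⊗ₜ pderivTuple v q := by
  induction k with
  | zero => simp [pderivTuple]
  | succ k ih =>
    rw [pow_succ', Module.End.mul_apply, ih, ← Fintype.sum_equiv (Fin.consEquiv fun _ => Fin n)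
      (fun w => pderivTuple (Fin.cons w.1 w.2) p ⊗ₜ pderivTuple (Fin.cons w.1 w.2) q) _
      (fun _ => rfl), Fintype.sum_prod_type]
    simp [gradPairing, pderivTuple_cons, map_sum, sum_comm (γ := Fin n)]

noncomputable def lapLeft :
    Module.End ℂ (MvPolynomial (Fin n) ℂ ⊗[ℂ] MvPolynomial (Fin n) ℂ) :=
  TensorProduct.map lapLin 1

noncomputable def lapRight :
    Module.End ℂ (MvPolynomial (Fin n) ℂ ⊗[ℂ] MvPolynomial (Fin n) ℂ) :=
  TensorProduct.map 1 lapLin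

theorem lapLin_comp_mul' :
    lapLin ∘ₗ LinearMap.mul' ℂ (MvPolynomial (Fin n) ℂ) =
      LinearMap.mul' ℂ _ ∘ₗ (lapLeft + 2 • gradPairing + lapRight) := by
  refine TensorProduct.ext' fun p q => ?_
  simp only [LinearMap.comp_apply, LinearMap.mul'_apply, coe_lapLin, LinearMap.add_apply,
    LinearMap.smul_apply, lapLeft, lapRight, map_tmul, Module.End.one_apply, gradPairing,
    LinearMap.sum_apply, map_sum, map_add, map_nsmul, lap_mul]
  rw [nsmul_eq_mul, Nat.cast_ofNat]
  rfl

theorem lapLin_pow_comp_mul' (l : ℕ) :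
    (lapLin ^ l) ∘ₗ LinearMap.mul' ℂ (MvPolynomial (Fin n) ℂ) =
      LinearMap.mul' ℂ _ ∘ₗ (lapLeft + 2 • gradPairing + lapRight) ^ l :=
  Module.End.commute_pow_left_of_commute lapLin_comp_mul' l

theorem commute_lapLeft_gradPairing : Commute lapLeft (gradPairing (n := n)) :=
  Commute.sum_right _ _ _ fun i _ =>
    TensorProduct.commute_map (commute_pderiv_lapLin i).symm (Commute.one_left _)

theorem commute_gradPairing_lapRight : Commute gradPairing (lapRight (n := n)) :=
  Commute.sum_left _ _ _ fun i _ =>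
    TensorProduct.commute_map (Commute.one_right _) (commute_pderiv_lapLin i)

theorem commute_lapLeft_lapRight : Commute lapLeft (lapRight (n := n)) :=
  TensorProduct.commute_map (Commute.one_right _) (Commute.one_left _)

theorem lapLeft_pow_mul_gradPairing_pow_mul_lapRight_pow_tmul (a b c : ℕ)
    (p q : MvPolynomial (Fin n) ℂ) :
    (lapLeft ^ a * gradPairing ^ b * lapRight ^ c : Module.End ℂ _) (p ⊗ₜ q) =
      ∑ v : Fin b → Fin n, pderivTuple v (lap^[a] p) ⊗ₜ pderivTuple v (lap^[c] q) := by
  rw [(commute_lapLeft_gradPairing.pow_pow a b).eq, mul_assoc, lapLeft, lapRight,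
    TensorProduct.map_pow, TensorProduct.map_pow, ← TensorProduct.map_mul]
  simp only [Module.End.mul_apply, map_tmul, one_pow, one_mul, mul_one, lapLin_pow_apply,
    gradPairing_pow_tmul]

end Laplacian

theorem lap_pow_mul_expansion_general {n : ℕ} (g f : MvPolynomial (Fin n) ℂ) (l : ℕ) :
    lap^[l] (g * f) =
      ∑ k₁ ∈ Finset.range (l + 1), ∑ k₂ ∈ Finset.range (l + 1 - k₁),
        ((2 ^ k₂ * (Nat.factorial l /
            (Nat.factorial k₁ * Nat.factorial k₂ * Nat.factorial (l - k₁ - k₂))) : ℕ) :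
              MvPolynomial (Fin n) ℂ) *
          ∑ v : Fin k₂ → Fin n,
            pderivTuple v (lap^[k₁] g) * pderivTuple v (lap^[l - k₁ - k₂] f) := by
  calc lap^[l] (g * f) = ((lapLin ^ l) ∘ₗ LinearMap.mul' ℂ _) (g ⊗ₜ f) := by
        rw [LinearMap.comp_apply, LinearMap.mul'_apply, lapLin_pow_apply]
    _ = LinearMap.mul' ℂ _
          (((lapLeft + 2 • gradPairing + lapRight) ^ l : Module.End ℂ _) (g ⊗ₜ f)) := by
        rw [lapLin_pow_comp_mul']; rfl
    _ = _ := by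
      rw [Commute.add_add_pow (commute_lapLeft_gradPairing.smul_right 2) commute_lapLeft_lapRight
        (commute_gradPairing_lapRight.smul_left 2)]
      simp only [LinearMap.sum_apply, LinearMap.smul_apply, smul_pow, mul_smul_comm,
        smul_mul_assoc, lapLeft_pow_mul_gradPairing_pow_mul_lapRight_pow_tmul, map_sum,
        map_nsmul, LinearMap.mul'_apply]
      refine sum_congr rfl fun k₁ hk₁ => sum_congr rfl fun k₂ hk₂ => ?_
      rw [Nat.factorial_div_factorial_mul_factorial_mul_factorial (by grind), smul_smul,
        nsmul_eq_mul, mul_comm (2 ^ k₂)]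

theorem lap_pow_mul_expansion {n : ℕ} (g f : MvPolynomial (Fin n) ℂ) (l : ℕ) (hl : 1 ≤ l) :
    lap^[l] (g * f) =
      ∑ k₁ ∈ Finset.range (l + 1), ∑ k₂ ∈ Finset.range (l + 1 - k₁),
        ((2 ^ k₂ * (Nat.factorial l /
            (Nat.factorial k₁ * Nat.factorial k₂ * Nat.factorial (l - k₁ - k₂))) : ℕ) :
              MvPolynomial (Fin n) ℂ) *
          ∑ v : Fin k₂ → Fin n,
            pderivTuple v (lap^[k₁] g) * pderivTuple v (lap^[l - k₁ - k₂] f) :=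
  lap_pow_mul_expansion_general g f l
end

section
/- Let P be a homogeneous polynomial of degree d ≥ 1 in ℂ[z_1,...,z_n]. Then for any integers k > l ≥ 0, the polynomial Δ^l(P^k) lies in the ideal of ℂ[z_1,...,z_n] generated by the partial derivatives ∂P/∂z_1, ..., ∂P/∂z_n. -/
open MvPolynomial

/-!
Every iterated partial derivative of `P` of order at most one lies in the Jacobian ideal `J`:
the first-order ones are its generators, and `P` itself is in `J` by Euler's identity
`d • P = ∑ i, X i * ∂ᵢ P`. By the Leibniz rule, `Δ^l (P^k)` is a linear combination of products
of `k` iterated partial derivatives of `P` whose orders add up to `2 l`. As `2 l < 2 k`, one of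
the factors of each such product has order at most one, so the product lies in `J`.
-/

section PderivProducts

variable {R σ : Type*} [CommSemiring R]

inductive IsIteratedPderiv (P : MvPolynomial σ R) : ℕ → MvPolynomial σ R → Prop
  | self : IsIteratedPderiv P 0 P
  | step {t : ℕ} {f : MvPolynomial σ R} (i : σ) :
      IsIteratedPderiv P t f → IsIteratedPderiv P (t + 1) (pderiv i f)

inductive IsPderivProduct (P : MvPolynomial σ R) : ℕ → ℕ → MvPolynomial σ R → Prop
  | one : IsPderivProduct P 0 0 1
  | mul {k s t : ℕ} {f g : MvPolynomial σ R} :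
      IsIteratedPderiv P s f → IsPderivProduct P k t g → IsPderivProduct P (k + 1) (s + t) (f * g)

noncomputable def pderivProductSpan (P : MvPolynomial σ R) (k t : ℕ) :
    Submodule R (MvPolynomial σ R) :=
  Submodule.span R {q | IsPderivProduct P k t q}

variable {P : MvPolynomial σ R}

theorem IsPderivProduct.pow (k : ℕ) : IsPderivProduct P k 0 (P ^ k) := by
  induction k with
  | zero => exact .one
  | succ k ih => simpa [pow_succ'] using IsPderivProduct.mul .self ih

theorem IsPderivProduct.mem_pderivProductSpan {k t : ℕ} {q : MvPolynomial σ R}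
    (h : IsPderivProduct P k t q) : q ∈ pderivProductSpan P k t :=
  Submodule.subset_span h

theorem mul_mem_pderivProductSpan {k s t : ℕ} {f q : MvPolynomial σ R}
    (hf : IsIteratedPderiv P s f) (hq : q ∈ pderivProductSpan P k t) :
    f * q ∈ pderivProductSpan P (k + 1) (s + t) := by
  induction hq using Submodule.span_induction with
  | mem g hg => exact (IsPderivProduct.mul hf hg).mem_pderivProductSpan
  | zero => simp
  | add g g' _ _ hg hg' => rw [mul_add]; exact Submodule.add_mem _ hg hg'
  | smul c g _ hg => rw [mul_smul_comm]; exact Submodule.smul_mem _ c hg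

theorem IsPderivProduct.pderiv_mem {k t : ℕ} {q : MvPolynomial σ R}
    (h : IsPderivProduct P k t q) (i : σ) : pderiv i q ∈ pderivProductSpan P k (t + 1) := by
  induction h with
  | one => simp
  | @mul k s t f g hf hg ih =>
    have hfirst := (IsPderivProduct.mul (hf.step i) hg).mem_pderivProductSpan
    rw [Nat.add_right_comm] at hfirst
    rw [pderiv_mul]
    exact Submodule.add_mem _ hfirst (mul_mem_pderivProductSpan (t := t + 1) hf ih)

theorem pderiv_mem_pderivProductSpan {k t : ℕ} {q : MvPolynomial σ R}
    (hq : q ∈ pderivProductSpan P k t) (i : σ) : pderiv i q ∈ pderivProductSpan P k (t + 1) := by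
  induction hq using Submodule.span_induction with
  | mem g hg => exact hg.pderiv_mem i
  | zero => simp
  | add g g' _ _ hg hg' => rw [map_add]; exact Submodule.add_mem _ hg hg'
  | smul c g _ hg => rw [(pderiv i).map_smul]; exact Submodule.smul_mem _ c hg

theorem IsIteratedPderiv.mem_ideal {I : Ideal (MvPolynomial σ R)} (hP : P ∈ I)
    (hdP : ∀ i, pderiv i P ∈ I) {t : ℕ} {f : MvPolynomial σ R} (h : IsIteratedPderiv P t f)
    (ht : t ≤ 1) : f ∈ I := by
  rcases h with _ | ⟨i, _ | _⟩
  · exact hP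
  · exact hdP i
  · omega

theorem IsPderivProduct.mem_ideal {I : Ideal (MvPolynomial σ R)} (hP : P ∈ I)
    (hdP : ∀ i, pderiv i P ∈ I) {k t : ℕ} {q : MvPolynomial σ R} (h : IsPderivProduct P k t q)
    (ht : t < 2 * k) : q ∈ I := by
  induction h with
  | one => omega
  | @mul k s t f g hf _ ih =>
    by_cases hs : s ≤ 1
    · exact I.mul_mem_right g (hf.mem_ideal hP hdP hs)
    · exact I.mul_mem_left f (ih (by omega))

theorem pderivProductSpan_le_ideal {I : Ideal (MvPolynomial σ R)} (hP : P ∈ I)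
    (hdP : ∀ i, pderiv i P ∈ I) {k t : ℕ} (ht : t < 2 * k) :
    pderivProductSpan P k t ≤ I.restrictScalars R :=
  Submodule.span_le.mpr fun _ hq => hq.mem_ideal hP hdP ht

end PderivProducts

theorem MvPolynomial.IsHomogeneous.mem_span_pderiv {K σ : Type*} [Field K] [Fintype σ]
    {P : MvPolynomial σ K} {d : ℕ} (hP : P.IsHomogeneous d) (hd : (d : K) ≠ 0) :
    P ∈ Ideal.span (Set.range fun i : σ => pderiv i P) := by
  have hEuler : C (d : K)⁻¹ * ∑ i, X i * pderiv i P = P := by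
    rw [hP.sum_X_mul_pderiv, nsmul_eq_mul, ← mul_assoc, ← map_natCast C, ← map_mul,
      inv_mul_cancel₀ hd, map_one, one_mul]
  set J := Ideal.span (Set.range fun i : σ => pderiv i P)
  have hsum : ∑ i, X i * pderiv i P ∈ J :=
    J.sum_mem fun i _ => J.mul_mem_left _ (Ideal.subset_span ⟨i, rfl⟩)
  simpa only [hEuler] using J.mul_mem_left (C (d : K)⁻¹) hsum

theorem lap_iterate_pow_mem_pderivProductSpan {n : ℕ} (P : MvPolynomial (Fin n) ℂ) (k l : ℕ) :
    lap^[l] (P ^ k) ∈ pderivProductSpan P k (2 * l) := by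
  induction l with
  | zero => exact (IsPderivProduct.pow k).mem_pderivProductSpan
  | succ l ih =>
    rw [Function.iterate_succ_apply', lap]
    exact Submodule.sum_mem _ fun i _ =>
      pderiv_mem_pderivProductSpan (pderiv_mem_pderivProductSpan ih i) i

theorem lap_pow_mem_jacobian_ideal {n d : ℕ} (hd : 1 ≤ d)
    (P : MvPolynomial (Fin n) ℂ) (hhom : P.IsHomogeneous d)
    (k l : ℕ) (hkl : l < k) :
    lap^[l] (P ^ k) ∈ Ideal.span (Set.range fun i : Fin n => pderiv i P) := by
  have hP := hhom.mem_span_pderiv (Nat.cast_ne_zero.mpr (by omega))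
  have hdP : ∀ i, pderiv i P ∈ Ideal.span (Set.range fun i : Fin n => pderiv i P) :=
    fun i => Ideal.subset_span ⟨i, rfl⟩
  exact pderivProductSpan_le_ideal hP hdP (by omega) (lap_iterate_pow_mem_pderivProductSpan P k l)
end

section
/- Let P ∈ ℂ[z_1,...,z_n] be a polynomial with Δ^m P^m = 0 for all m ≥ 1 (e.g., P Hessian nilpotent). Define u_{k,α} = (α!/(2^k·k!·(k+α)!))·Δ^k P^{k+α} for integers k ≥ 0 and α ≥ 1, and suppose the generating identity Q_t^γ = Σ_{m≥0} u_{m,γ} t^m holds, where Q_t is the deformed inversion pair of P. Then for all α, β ≥ 1 and m ≥ 0: u_{m,α+β} = Σ_{k+l=m, k,l≥0} u_{k,α}·u_{l,β}; equivalently, Δ^m P^{m+α+β} = C(α+β,α)^{-1}·Σ_{k+l = m} C(m,k)·C(m+α+β, k+α)·(Δ^k P^{k+α})·(Δ^l P^{l+β}). -/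
open MvPolynomial

/-- `u_{k,α} = (α!/(2^k k! (k+α)!)) Δ^k P^{k+α}`. -/
noncomputable def uCoeff {n : ℕ} (P : MvPolynomial (Fin n) ℂ) (k α : ℕ) :
    MvPolynomial (Fin n) ℂ :=
  C ((Nat.factorial α : ℂ) / (2 ^ k * Nat.factorial k * Nat.factorial (k + α))) *
    lap^[k] (P ^ (k + α))

/-!
Comparing coefficients of `t^m` in `Q^(α+β) = Q^α * Q^β` gives the convolution of the `u`'s;
clearing their normalising constants turns it into the binomial form, by a factorial identity.
-/

lemma PowerSeries.coeff_mk_mul_mk {R : Type*} [CommSemiring R] (f g : ℕ → R) (m : ℕ) :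
    coeff m (mk f * mk g) = ∑ k ∈ Finset.range (m + 1), f k * g (m - k) := by
  rw [coeff_mul,
    Finset.Nat.sum_antidiagonal_eq_sum_range_succ fun i j => coeff i (mk f) * coeff j (mk g)]
  simp only [coeff_mk]

noncomputable def uCoeffScale (α k : ℕ) : ℂ :=
  (α.factorial : ℂ) / (2 ^ k * k.factorial * (k + α).factorial)

lemma uCoeffScale_ne_zero (α k : ℕ) : uCoeffScale α k ≠ 0 := by
  simp [uCoeffScale, Nat.factorial_ne_zero]

lemma uCoeffScale_inv_mul_mul (α β k l : ℕ) :
    (uCoeffScale (α + β) (k + l))⁻¹ * uCoeffScale α k * uCoeffScale β l =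
      ((α + β).choose α : ℂ)⁻¹ * (k + l).choose k * (k + l + (α + β)).choose (k + α) := by
  rw [Nat.cast_choose ℂ (Nat.le_add_right α β), Nat.cast_choose ℂ (Nat.le_add_right k l),
    Nat.cast_choose ℂ (by omega : k + α ≤ k + l + (α + β)), Nat.add_sub_cancel_left,
    Nat.add_sub_cancel_left, (by omega : k + l + (α + β) - (k + α) = l + β)]
  unfold uCoeffScale
  field_simp
  ring

section

variable {n : ℕ} (P : MvPolynomial (Fin n) ℂ)

lemma uCoeff_eq (k α : ℕ) : uCoeff P k α = C (uCoeffScale α k) * lap^[k] (P ^ (k + α)) := rfl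

lemma lap_iterate_pow_add_eq (k α : ℕ) :
    lap^[k] (P ^ (k + α)) = C (uCoeffScale α k)⁻¹ * uCoeff P k α := by
  rw [uCoeff_eq, ← mul_assoc, ← map_mul, inv_mul_cancel₀ (uCoeffScale_ne_zero α k), map_one,
    one_mul]

lemma uCoeff_mul_uCoeff (k l α β : ℕ) :
    uCoeff P k α * uCoeff P l β =
      C (uCoeffScale α k * uCoeffScale β l) *
        (lap^[k] (P ^ (k + α)) * lap^[l] (P ^ (l + β))) := by
  rw [uCoeff_eq, uCoeff_eq, map_mul]
  ring

end

theorem uCoeff_convolution_general {n : ℕ} (P : MvPolynomial (Fin n) ℂ)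
    (Q : PowerSeries (MvPolynomial (Fin n) ℂ))
    (hQ : ∀ γ : ℕ, 1 ≤ γ → Q ^ γ = PowerSeries.mk fun m => uCoeff P m γ) :
    ∀ (α β : ℕ), 1 ≤ α → 1 ≤ β → ∀ m : ℕ,
      (uCoeff P m (α + β) =
          ∑ k ∈ Finset.range (m + 1), uCoeff P k α * uCoeff P (m - k) β) ∧
        lap^[m] (P ^ (m + α + β)) =
          C (((Nat.choose (α + β) α : ℂ))⁻¹) *
            ∑ k ∈ Finset.range (m + 1),
              ((Nat.choose m k : MvPolynomial (Fin n) ℂ)) *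
                ((Nat.choose (m + α + β) (k + α) : MvPolynomial (Fin n) ℂ)) *
                  (lap^[k] (P ^ (k + α)) * lap^[m - k] (P ^ (m - k + β))) := by
  intro α β hα hβ m
  have hconv : uCoeff P m (α + β) =
      ∑ k ∈ Finset.range (m + 1), uCoeff P k α * uCoeff P (m - k) β := by
    rw [← PowerSeries.coeff_mk m (fun j => uCoeff P j (α + β)), ← hQ _ (by omega), pow_add,
      hQ α hα, hQ β hβ, PowerSeries.coeff_mk_mul_mk]
  refine ⟨hconv, ?_⟩
  rw [add_assoc, lap_iterate_pow_add_eq, hconv, Finset.mul_sum, Finset.mul_sum]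
  refine Finset.sum_congr rfl fun k hk => ?_
  obtain ⟨l, rfl⟩ := Nat.exists_eq_add_of_le (Nat.lt_succ_iff.mp (Finset.mem_range.mp hk))
  rw [Nat.add_sub_cancel_left, uCoeff_mul_uCoeff, ← mul_assoc, ← map_mul,
    ← mul_assoc (uCoeffScale _ _)⁻¹, uCoeffScale_inv_mul_mul, map_mul, map_mul, map_natCast,
    map_natCast]
  ring

theorem uCoeff_convolution {n : ℕ} (P : MvPolynomial (Fin n) ℂ)
    (hvan : ∀ m : ℕ, 1 ≤ m → lap^[m] (P ^ m) = 0)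
    (Q : PowerSeries (MvPolynomial (Fin n) ℂ))
    (hQ : ∀ γ : ℕ, 1 ≤ γ → Q ^ γ = PowerSeries.mk fun m => uCoeff P m γ) :
    ∀ (α β : ℕ), 1 ≤ α → 1 ≤ β → ∀ m : ℕ,
      (uCoeff P m (α + β) =
          ∑ k ∈ Finset.range (m + 1), uCoeff P k α * uCoeff P (m - k) β) ∧
        lap^[m] (P ^ (m + α + β)) =
          C (((Nat.choose (α + β) α : ℂ))⁻¹) *
            ∑ k ∈ Finset.range (m + 1),
              ((Nat.choose m k : MvPolynomial (Fin n) ℂ)) *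
                ((Nat.choose (m + α + β) (k + α) : MvPolynomial (Fin n) ℂ)) *
                  (lap^[k] (P ^ (k + α)) * lap^[m - k] (P ^ (m - k + β))) :=
  uCoeff_convolution_general P Q hQ
end
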